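/- Inclusion of elliptic classes in subelliptic classes: let G be a compact Lie group and 𝓛 the positive sub-Laplacian of a Hörmander system of step κ. For every m > 0, 0 < ρ ≤ 1 and 0 ≤ δ ≤ 1, one has 𝓢^{m/κ}_{ρ, δ/κ}(G) ⊂ S^{m,𝓛}_{ρ,δ}(G×Ĝ); that is, every symbol σ with ‖∂_X^{(β)}Δ_ξ^α σ(x,ξ)‖_op ≲ ⟨ξ⟩^{m/κ − ρ|α| + (δ/κ)|β|} satisfies ‖𝓜̂(ξ)^{−m+ρ|α|−δ|β|} ∂_X^{(β)}Δ_ξ^α σ(x,ξ)‖_op ≤ C uniformly over G×Ĝ. -/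

import Mathlib

open MeasureTheory Matrix
open scoped BigOperators ComplexOrder

namespace Garding

/-- The ℓ²→ℓ² operator norm of a square complex matrix. -/
noncomputable def matOpNorm {k : ℕ} (A : Matrix (Fin k) (Fin k) ℂ) : ℝ :=
  ‖Matrix.toEuclideanCLM (𝕜 := ℂ) A‖

/-- The length `|α|` of a multi-index. -/
def mSize {n : ℕ} (α : Fin n → ℕ) : ℕ := ∑ j, α j

/-- Squared Hilbert-Schmidt norm of a matrix. -/
noncomputable def hs2 {k : ℕ} (A : Matrix (Fin k) (Fin k) ℂ) : ℝ :=
  ∑ j, ∑ l, ‖A j l‖ ^ 2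

/-- A compact Lie group setting on a compact topological group `G` of dimension `n`:
normalized Haar measure `μ`, the unitary dual (`dual`, `dim`, `rep`),
the eigenvalues `lam` of the positive Laplacian on matrix coefficients,
an abstract notion of smooth (`C^∞`) function, and a fixed strongly admissible
collection of difference operators `Diff` (acting in the frequency variable)
together with the associated left-invariant derivatives `Deriv`. -/
structure GroupSetting (G : Type) [Group G] [TopologicalSpace G]
    [IsTopologicalGroup G] [CompactSpace G] [MeasurableSpace G] where
  /-- the dimension of the group -/
  n : ℕ
  /-- normalized Haar measure -/
  μ : Measure G
  μ_prob : IsProbabilityMeasure μ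
  μ_left_inv : μ.IsMulLeftInvariant
  /-- the unitary dual `Ĝ` -/
  dual : Type
  /-- `d_ξ` -/
  dim : dual → ℕ
  dim_pos : ∀ i, 0 < dim i
  /-- irreducible unitary representations -/
  rep : (i : dual) → G → Matrix (Fin (dim i)) (Fin (dim i)) ℂ
  rep_mul : ∀ i x y, rep i (x * y) = rep i x * rep i y
  rep_unitary : ∀ i x, (rep i x)ᴴ * rep i x = 1
  rep_cont : ∀ i j l, Continuous fun x => rep i x j l
  /-- eigenvalues `λ_{[ξ]}` of the positive Laplacian -/
  lam : dual → ℝ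
  lam_nonneg : ∀ i, 0 ≤ lam i
  /-- the predicate `f ∈ C^∞(G)` -/
  Smooth : (G → ℂ) → Prop
  smooth_continuous : ∀ f, Smooth f → Continuous f
  /-- difference operators `Δ_ξ^α` from a strongly admissible collection -/
  Diff : (Fin n → ℕ) →
    ((i : dual) → Matrix (Fin (dim i)) (Fin (dim i)) ℂ) →
    ((i : dual) → Matrix (Fin (dim i)) (Fin (dim i)) ℂ)
  /-- left-invariant derivatives `∂_X^{(β)}` -/
  Deriv : (Fin n → ℕ) → (G → ℂ) → (G → ℂ)
  Diff_zero : ∀ σ, Diff 0 σ = σ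
  Deriv_zero : ∀ f, Deriv 0 f = f

variable {G : Type} [Group G] [TopologicalSpace G] [IsTopologicalGroup G]
  [CompactSpace G] [MeasurableSpace G]

/-- Global matrix-valued symbols on `G × Ĝ`. -/
def GSymbol (S : GroupSetting G) : Type :=
  G → (i : S.dual) → Matrix (Fin (S.dim i)) (Fin (S.dim i)) ℂ

namespace GroupSetting

variable (S : GroupSetting G)

/-- The elliptic weight `⟨ξ⟩ = (1+λ_{[ξ]})^{1/2}`. -/
noncomputable def elw (i : S.dual) : ℝ := (1 + S.lam i) ^ ((1 : ℝ) / 2)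

/-- `Δ_ξ^α` acting on global symbols (in the frequency variable). -/
def diffS (α : Fin S.n → ℕ) (σ : GSymbol S) : GSymbol S :=
  fun x => S.Diff α (σ x)

/-- `∂_X^{(β)}` acting on global symbols (entrywise, in the space variable). -/
def derivS (β : Fin S.n → ℕ) (σ : GSymbol S) : GSymbol S :=
  fun x i => Matrix.of fun j l => S.Deriv β (fun x' => σ x' i j l) x

/-- The group Fourier transform `f̂(ξ) = ∫_G f(x) ξ(x)^* dx`. -/
noncomputable def fourierCoeff (u : G → ℂ) (i : S.dual) :
    Matrix (Fin (S.dim i)) (Fin (S.dim i)) ℂ :=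
  Matrix.of fun j l => ∫ x, u x * (S.rep i x)ᴴ j l ∂S.μ

/-- The quantization `Op(σ)f(x) = Σ_{[ξ]} d_ξ Tr(ξ(x) σ(x,ξ) f̂(ξ))`. -/
noncomputable def Op (σ : GSymbol S) (u : G → ℂ) (x : G) : ℂ :=
  ∑' i : S.dual, (S.dim i : ℂ) * Matrix.trace (S.rep i x * σ x i * S.fourierCoeff u i)

/-- The `L²(G)` inner product `(f,g) = ∫_G f ḡ dμ`. -/
noncomputable def inner2 (f g : G → ℂ) : ℂ :=
  ∫ x, f x * (starRingEnd ℂ) (g x) ∂S.μ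

/-- The `L²(G)` norm. -/
noncomputable def l2Norm (u : G → ℂ) : ℝ :=
  Real.sqrt (∫ x, ‖u x‖ ^ 2 ∂S.μ)

/-- The Sobolev norm `‖u‖_{H^s(G)} = ‖(1-Δ)^{s/2}u‖_{L²(G)}`, via Plancherel. -/
noncomputable def sobNorm (s : ℝ) (u : G → ℂ) : ℝ :=
  Real.sqrt (∑' i : S.dual, (S.dim i : ℝ) * (1 + S.lam i) ^ s * hs2 (S.fourierCoeff u i))

/-- Membership in the global Hörmander class `𝓢^m_{ρ,δ}(G)`:
`‖∂_X^{(β)} Δ_ξ^α σ(x,ξ)‖_op ≤ C_{α,β} ⟨ξ⟩^{m - ρ|α| + δ|β|}`. -/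
def InEll (m ρ δ : ℝ) (σ : GSymbol S) : Prop :=
  (∀ i j l, S.Smooth fun x => σ x i j l) ∧
  ∀ α β : Fin S.n → ℕ, ∃ C : ℝ, ∀ (x : G) (i : S.dual),
    matOpNorm ((S.derivS β (S.diffS α σ)) x i) ≤
      C * (1 + S.lam i) ^ ((m - ρ * (mSize α : ℝ) + δ * (mSize β : ℝ)) / 2)

end GroupSetting

/-- The data of a positive sub-Laplacian `𝓛 = -(X₁² + ⋯ + X_k²)` associated with a
system of left-invariant vector fields satisfying Hörmander's condition of step `κ`:
the symbol of `𝓛` at `[ξ]` is diagonal, `𝓛̂(ξ) = diag(ν_{ii}(ξ)²)`, and the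
eigenvalues satisfy `⟨ξ⟩^{1/κ} ≲ (1+ν_{ii}(ξ)²)^{1/2} ≲ ⟨ξ⟩`. -/
structure SubLap (S : GroupSetting G) where
  /-- the step of the Hörmander system -/
  κ : ℕ
  κ_pos : 0 < κ
  /-- `ν_{ii}(ξ)`, so that `𝓛̂(ξ) = diag(ν_{ii}(ξ)²)` -/
  nu : (i : S.dual) → Fin (S.dim i) → ℝ
  nu_nonneg : ∀ i j, 0 ≤ nu i j
  spectral_lower : ∃ c : ℝ, 0 < c ∧ ∀ i j,
    c * (1 + S.lam i) ^ ((1 : ℝ) / (2 * κ)) ≤ (1 + nu i j ^ 2) ^ ((1 : ℝ) / 2)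
  spectral_upper : ∃ c : ℝ, 0 < c ∧ ∀ i j,
    (1 + nu i j ^ 2) ^ ((1 : ℝ) / 2) ≤ c * (1 + S.lam i) ^ ((1 : ℝ) / 2)

namespace SubLap

variable {S : GroupSetting G} (D : SubLap S)

/-- `𝓜̂(ξ)^s = diag((1+ν_{ii}(ξ)²)^{s/2})`, the symbol of `(1+𝓛)^{s/2}`. -/
noncomputable def Mhat (s : ℝ) (i : S.dual) :
    Matrix (Fin (S.dim i)) (Fin (S.dim i)) ℂ :=
  Matrix.diagonal fun j => (((1 + D.nu i j ^ 2) ^ (s / 2) : ℝ) : ℂ)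

/-- Membership in the subelliptic Hörmander class `S^{m,𝓛}_{ρ,δ}(G×Ĝ)`:
both `‖𝓜̂(ξ)^{ρ|α|-δ|β|-m} ∂_X^{(β)} Δ_ξ^α σ(x,ξ)‖_op` and
`‖(∂_X^{(β)} Δ_ξ^α σ(x,ξ)) 𝓜̂(ξ)^{ρ|α|-δ|β|-m}‖_op` are uniformly bounded. -/
def InSub (m ρ δ : ℝ) (σ : GSymbol S) : Prop :=
  (∀ i j l, S.Smooth fun x => σ x i j l) ∧
  ∀ α β : Fin S.n → ℕ, ∃ C : ℝ, ∀ (x : G) (i : S.dual),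
    matOpNorm (D.Mhat (ρ * (mSize α : ℝ) - δ * (mSize β : ℝ) - m) i *
        (S.derivS β (S.diffS α σ)) x i) ≤ C ∧
    matOpNorm ((S.derivS β (S.diffS α σ)) x i *
        D.Mhat (ρ * (mSize α : ℝ) - δ * (mSize β : ℝ) - m) i) ≤ C

/-- The subelliptic Sobolev norm `‖u‖_{H^{s,𝓛}(G)} = ‖(1+𝓛)^{s/2}u‖_{L²(G)}`,
via Plancherel. -/
noncomputable def sobNormL (s : ℝ) (u : G → ℂ) : ℝ :=
  Real.sqrt (∑' i : S.dual, (S.dim i : ℝ) * hs2 (D.Mhat s i * S.fourierCoeff u i))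

end SubLap



lemma matOpNorm_nonneg' {k : ℕ} (A : Matrix (Fin k) (Fin k) ℂ) : 0 ≤ matOpNorm A :=
  norm_nonneg _

lemma matOpNorm_mul_le {k : ℕ} (A B : Matrix (Fin k) (Fin k) ℂ) :
    matOpNorm (A * B) ≤ matOpNorm A * matOpNorm B := by
  unfold matOpNorm; rw [_root_.map_mul]; exact norm_mul_le _ _

lemma matOpNorm_diagonal_le {k : ℕ} (d : Fin k → ℂ) (M : ℝ) (hM : 0 ≤ M)
    (h : ∀ j, ‖d j‖ ≤ M) : matOpNorm (Matrix.diagonal d) ≤ M := by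
  apply ContinuousLinearMap.opNorm_le_bound _ hM
  intro x
  have hy : ∀ j, toEuclideanCLM (𝕜 := ℂ) (diagonal d) x j = d j * x j := by
    intro j
    have hj := congrFun (Matrix.ofLp_toEuclideanCLM (𝕜 := ℂ) (diagonal d) x) j
    simpa [Matrix.toLin'_apply, Matrix.mulVec_diagonal] using hj
  rw [EuclideanSpace.norm_eq, EuclideanSpace.norm_eq]
  rw [show M * Real.sqrt (∑ j, ‖x j‖ ^ 2) = Real.sqrt (M ^ 2 * ∑ j, ‖x j‖ ^ 2) by
    rw [Real.sqrt_mul (by positivity), Real.sqrt_sq hM]]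
  apply Real.sqrt_le_sqrt
  rw [Finset.mul_sum]
  apply Finset.sum_le_sum
  intro j _
  rw [hy j, norm_mul, mul_pow]
  exact mul_le_mul_of_nonneg_right (pow_le_pow_left₀ (norm_nonneg _) (h j) 2)
    (by positivity)

/-- Inclusion of elliptic classes in subelliptic classes:
for `m > 0`, `0 < ρ ≤ 1`, `0 ≤ δ ≤ 1` one has
`𝓢^{m/κ}_{ρ, δ/κ}(G) ⊂ S^{m,𝓛}_{ρ,δ}(G×Ĝ)`. -/
theorem elliptic_class_subset_subelliptic_class
    (S : GroupSetting G) (D : SubLap S) (m ρ δ : ℝ)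
    (hm : 0 < m) (hρ0 : 0 < ρ) (hρ1 : ρ ≤ 1) (hδ0 : 0 ≤ δ) (hδ1 : δ ≤ 1)
    (σ : GSymbol S) (hσ : S.InEll (m / (D.κ : ℝ)) ρ (δ / (D.κ : ℝ)) σ) :
    D.InSub m ρ δ σ := by
  obtain ⟨hsm, hbd⟩ := hσ
  refine ⟨hsm, fun α β => ?_⟩
  obtain ⟨C, hC⟩ := hbd α β
  obtain ⟨c₁, hc₁, hlow⟩ := D.spectral_lower
  obtain ⟨c₂, hc₂, hup⟩ := D.spectral_upper
  set A : ℝ := (mSize α : ℝ) with hA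
  set B : ℝ := (mSize β : ℝ) with hB
  have hA0 : 0 ≤ A := Nat.cast_nonneg _
  have hB0 : 0 ≤ B := Nat.cast_nonneg _
  set k : ℝ := (D.κ : ℝ) with hk
  have hk1 : (1 : ℝ) ≤ k := by rw [hk]; exact_mod_cast D.κ_pos
  have hk0 : (0 : ℝ) < k := lt_of_lt_of_le one_pos hk1
  set s : ℝ := ρ * A - δ * B - m with hs_def
  set C₀ : ℝ := max C 0 with hC₀
  have hC₀0 : 0 ≤ C₀ := le_max_right _ _
  refine ⟨C₀ * max (c₁ ^ s) (c₂ ^ s), fun x i => ?_⟩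
  set L : ℝ := 1 + S.lam i with hLdef
  have hL1 : (1 : ℝ) ≤ L := le_add_of_nonneg_right (S.lam_nonneg i)
  have hL0 : (0 : ℝ) < L := lt_of_lt_of_le one_pos hL1
  set e2 : ℝ := (m / k - ρ * A + δ / k * B) / 2 with he2
  have hτ : matOpNorm ((S.derivS β (S.diffS α σ)) x i) ≤ C₀ * L ^ e2 := by
    refine (hC x i).trans ?_
    exact mul_le_mul_of_nonneg_right (le_max_left _ _)
      (Real.rpow_nonneg hL0.le _)
  have key : ∃ K t : ℝ, 0 ≤ K ∧ K ≤ max (c₁ ^ s) (c₂ ^ s) ∧ t + e2 ≤ 0 ∧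
      ∀ j : Fin (S.dim i), ((1 + D.nu i j ^ 2) ^ (s / 2) : ℝ) ≤ K * L ^ t := by
    rcases le_or_gt s 0 with hs | hs
    · refine ⟨c₁ ^ s, s / (2 * k), Real.rpow_nonneg hc₁.le _,
        le_max_left _ _, ?_, fun j => ?_⟩
      · have heq : s / (2 * k) + e2 = ρ * A * (1 - k) / (2 * k) := by
          rw [he2, hs_def]; field_simp; ring
        rw [heq]
        apply div_nonpos_of_nonpos_of_nonneg
        · exact mul_nonpos_of_nonneg_of_nonpos (by positivity) (by linarith)
        · linarith
      · have ha : (0 : ℝ) < 1 + D.nu i j ^ 2 := by positivity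
        have hlhs : (0 : ℝ) < c₁ * L ^ ((1 : ℝ) / (2 * k)) := by positivity
        have h1 := Real.rpow_le_rpow_of_nonpos hlhs (hlow i j) hs
        calc ((1 + D.nu i j ^ 2) ^ (s / 2) : ℝ)
            = ((1 + D.nu i j ^ 2) ^ ((1 : ℝ) / 2)) ^ s := by
              rw [← Real.rpow_mul ha.le]; ring_nf
          _ ≤ (c₁ * L ^ ((1 : ℝ) / (2 * k))) ^ s := h1
          _ = c₁ ^ s * L ^ (s / (2 * k)) := by
              rw [Real.mul_rpow hc₁.le (Real.rpow_nonneg hL0.le _),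
                ← Real.rpow_mul hL0.le]
              ring_nf
    · refine ⟨c₂ ^ s, s / 2, Real.rpow_nonneg hc₂.le _,
        le_max_right _ _, ?_, fun j => ?_⟩
      · have heq : s / 2 + e2 = (m + δ * B) * (1 - k) / (2 * k) := by
          rw [he2, hs_def]; field_simp; ring
        rw [heq]
        apply div_nonpos_of_nonpos_of_nonneg
        · apply mul_nonpos_of_nonneg_of_nonpos (by positivity) (by linarith)
        · linarith
      · have ha : (0 : ℝ) < 1 + D.nu i j ^ 2 := by positivity
        have h1 := Real.rpow_le_rpow (Real.rpow_nonneg ha.le _) (hup i j) hs.le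
        calc ((1 + D.nu i j ^ 2) ^ (s / 2) : ℝ)
            = ((1 + D.nu i j ^ 2) ^ ((1 : ℝ) / 2)) ^ s := by
              rw [← Real.rpow_mul ha.le]; ring_nf
          _ ≤ (c₂ * L ^ ((1 : ℝ) / 2)) ^ s := h1
          _ = c₂ ^ s * L ^ (s / 2) := by
              rw [Real.mul_rpow hc₂.le (Real.rpow_nonneg hL0.le _),
                ← Real.rpow_mul hL0.le]
              ring_nf
  obtain ⟨K, t, hK0, hKmax, hte, hd⟩ := key
  have hdiag : matOpNorm (D.Mhat (ρ * (mSize α : ℝ) - δ * (mSize β : ℝ) - m) i)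
      ≤ K * L ^ t := by
    rw [SubLap.Mhat]
    apply matOpNorm_diagonal_le _ _ (by positivity)
    intro j
    rw [Complex.norm_real, Real.norm_eq_abs,
      abs_of_nonneg (Real.rpow_nonneg (by positivity) _)]
    exact hd j
  have hfinal : ∀ P Q : Matrix (Fin (S.dim i)) (Fin (S.dim i)) ℂ,
      matOpNorm P ≤ K * L ^ t → matOpNorm Q ≤ C₀ * L ^ e2 →
      matOpNorm (P * Q) ≤ C₀ * max (c₁ ^ s) (c₂ ^ s) := by
    intro P Q hP hQ
    calc matOpNorm (P * Q) ≤ matOpNorm P * matOpNorm Q := matOpNorm_mul_le _ _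
      _ ≤ (K * L ^ t) * (C₀ * L ^ e2) := by
          exact mul_le_mul hP hQ (matOpNorm_nonneg' _) (by positivity)
      _ = (C₀ * K) * L ^ (t + e2) := by rw [Real.rpow_add hL0]; ring
      _ ≤ (C₀ * K) * 1 := by
          exact mul_le_mul_of_nonneg_left
            (Real.rpow_le_one_of_one_le_of_nonpos hL1 hte) (by positivity)
      _ = C₀ * K := mul_one _
      _ ≤ C₀ * max (c₁ ^ s) (c₂ ^ s) := mul_le_mul_of_nonneg_left hKmax hC₀0
  exact ⟨hfinal _ _ hdiag hτ, by
    calc matOpNorm ((S.derivS β (S.diffS α σ)) x i *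
          D.Mhat (ρ * (mSize α : ℝ) - δ * (mSize β : ℝ) - m) i)
        ≤ matOpNorm ((S.derivS β (S.diffS α σ)) x i) *
          matOpNorm (D.Mhat (ρ * (mSize α : ℝ) - δ * (mSize β : ℝ) - m) i) :=
          matOpNorm_mul_le _ _
      _ ≤ (C₀ * L ^ e2) * (K * L ^ t) := by
          exact mul_le_mul hτ hdiag (matOpNorm_nonneg' _) (by positivity)
      _ = (C₀ * K) * L ^ (t + e2) := by rw [Real.rpow_add hL0]; ring
      _ ≤ (C₀ * K) * 1 := by
          exact mul_le_mul_of_nonneg_left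
            (Real.rpow_le_one_of_one_le_of_nonpos hL1 hte) (by positivity)
      _ = C₀ * K := mul_one _
      _ ≤ C₀ * max (c₁ ^ s) (c₂ ^ s) := mul_le_mul_of_nonneg_left hKmax hC₀0⟩


end Garding
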